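/- arXiv:1206.1614 — 3 statements merged into one kernel-verified Lean document; each statement's English description precedes it below -/
import Mathlib

section
/- Let n ≥ 1, let R be an invertible complex n×n matrix, and let τ be a complex n×n matrix with τ* = τ and τ² = 1 (so τ is a self-adjoint unitary involution), where M* denotes conjugate transpose. Assume R* = τ R τ. Let P be the (unique) positive-definite square root of the positive-definite matrix R*R, and set σ = τ R P⁻¹. Then σ is self-adjoint (σ* = σ), unitary (σ*σ = 1), and involutive (σ² = 1). -/
open Matrix
open scoped ComplexOrder

/-!
Put `S = τ R`. The relation `Rᴴ = τ R τ` makes `S` self-adjoint with `S² = Rᴴ R = P²`. Hence `S`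
commutes with `P²`, and so with its positive square root `P`. A self-adjoint `S` commuting with
the self-adjoint invertible `P` and satisfying `S² = P²` gives `σ = S P⁻¹` with `σᴴ = P⁻¹ S = σ`
and `σ² = S² P⁻² = 1`.
-/

section SquareRoot

variable {A : Type*} [PartialOrder A] [NonUnitalRing A] [TopologicalSpace A] [StarRing A]
  [Module ℝ A] [SMulCommClass ℝ A A] [IsScalarTower ℝ A A] [StarOrderedRing A]
  [NonUnitalContinuousFunctionalCalculus ℝ A IsSelfAdjoint] [NonnegSpectrumClass ℝ A]
  [IsTopologicalRing A] [T2Space A]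

theorem Commute.of_mul_self_right {a b : A} (hb : 0 ≤ b) (h : Commute a (b * b)) :
    Commute a b := by
  rw [← CFC.sqrt_mul_self b hb]
  exact (h.symm.cfcₙ_nnreal _).symm

end SquareRoot

section Inverse

variable {M : Type*} [Monoid M] {s p q : M}

theorem Commute.inv_right_of_mul_eq_one (hpq : p * q = 1) (hqp : q * p = 1)
    (hsp : Commute s p) : Commute s q :=
  hsp.units_inv_right (u := ⟨p, q, hpq, hqp⟩)

theorem mul_self_mul_inverse_eq_one (hpq : p * q = 1) (hsq : Commute s q)
    (hss : s * s = p * p) : (s * q) * (s * q) = 1 :=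
  calc (s * q) * (s * q) = s * (q * s) * q := by simp only [mul_assoc]
    _ = s * s * (q * q) := by rw [← hsq.eq]; simp only [mul_assoc]
    _ = p * (p * q) * q := by rw [hss]; simp only [mul_assoc]
    _ = 1 := by rw [hpq, mul_one, hpq]

variable [StarMul M]

theorem IsSelfAdjoint.of_mul_eq_one (hp : IsSelfAdjoint p) (hpq : p * q = 1) :
    IsSelfAdjoint q :=
  left_inv_eq_right_inv (by rw [← hp.star_eq, ← star_mul, hpq, star_one]) hpq

theorem IsSelfAdjoint.mul_of_commute (hs : IsSelfAdjoint s) (hq : IsSelfAdjoint q)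
    (hsq : Commute s q) : IsSelfAdjoint (s * q) := by
  rw [IsSelfAdjoint, star_mul, hs.star_eq, hq.star_eq, hsq.eq]

end Inverse

theorem stmt_2_general {n : ℕ} (R τ P : Matrix (Fin n) (Fin n) ℂ)
    (hτsa : τᴴ = τ) (hτ2 : τ * τ = 1)
    (hRτ : Rᴴ = τ * R * τ)
    (hP : P.PosDef) (hPsq : P * P = Rᴴ * R) :
    (τ * R * P⁻¹)ᴴ = τ * R * P⁻¹ ∧
      (τ * R * P⁻¹)ᴴ * (τ * R * P⁻¹) = 1 ∧
      (τ * R * P⁻¹) * (τ * R * P⁻¹) = 1 := by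
  have hS : IsSelfAdjoint (τ * R) := by
    rw [IsSelfAdjoint, star_eq_conjTranspose, conjTranspose_mul, hτsa, hRτ, mul_assoc,
      mul_assoc, hτ2, mul_one]
  have hSS : (τ * R) * (τ * R) = P * P := by
    rw [hPsq, hRτ]; noncomm_ring
  have hSPP : Commute (τ * R) (P * P) := hSS ▸ (Commute.refl _).mul_right (Commute.refl _)
  have hSP : Commute (τ * R) P := by
    open scoped MatrixOrder in exact hSPP.of_mul_self_right hP.posSemidef.nonneg
  have hPd : IsUnit P.det := (P.isUnit_iff_isUnit_det).mp hP.isUnit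
  have hPinv : P * P⁻¹ = 1 := mul_nonsing_inv P hPd
  have hSP' : Commute (τ * R) P⁻¹ :=
    hSP.inv_right_of_mul_eq_one hPinv (nonsing_inv_mul P hPd)
  have hσ : IsSelfAdjoint (τ * R * P⁻¹) :=
    hS.mul_of_commute (hP.isHermitian.isSelfAdjoint.of_mul_eq_one hPinv) hSP'
  have hσσ : (τ * R * P⁻¹) * (τ * R * P⁻¹) = 1 := mul_self_mul_inverse_eq_one hPinv hSP' hSS
  exact ⟨hσ.isHermitian.eq, by rw [hσ.isHermitian.eq, hσσ], hσσ⟩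

/-- If `R` is an invertible complex `n × n` matrix, `τ` a self-adjoint unitary involution
with `Rᴴ = τ R τ`, and `P` the positive-definite square root of `Rᴴ R`, then
`σ = τ R P⁻¹` is self-adjoint, unitary and involutive. -/
theorem stmt_2 {n : ℕ} (hn : 1 ≤ n) (R τ P : Matrix (Fin n) (Fin n) ℂ)
    (hR : IsUnit R) (hτsa : τᴴ = τ) (hτ2 : τ * τ = 1)
    (hRτ : Rᴴ = τ * R * τ)
    (hP : P.PosDef) (hPsq : P * P = Rᴴ * R) :
    (τ * R * P⁻¹)ᴴ = τ * R * P⁻¹ ∧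
      (τ * R * P⁻¹)ᴴ * (τ * R * P⁻¹) = 1 ∧
      (τ * R * P⁻¹) * (τ * R * P⁻¹) = 1 :=
  stmt_2_general R τ P hτsa hτ2 hRτ hP hPsq
end

section
/- Let V be a finite-dimensional complex inner product space and let a, ψ : V → V be unitary linear maps with a² = id and a ∘ ψ ∘ a = ψ⁻¹. Then dim ker(a − id) − dim ker(a + id) = [dim(ker(a − id) ∩ ker(ψ − id)) − dim(ker(a + id) ∩ ker(ψ − id))] + [dim(ker(a − id) ∩ ker(ψ + id)) − dim(ker(a + id) ∩ ker(ψ + id))]. -/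
/-!
Put `S = ψ - ψ⁻¹`. From `a ψ a = ψ⁻¹` and `a² = 1`, `a` anticommutes with `S`; since `ψ` is
unitary, `S` is skew-adjoint, so `V = ker S ⊕ range S`, and `ker S = ker (ψ - 1) ⊕ ker (ψ + 1)`.
All three summands are `a`-invariant, so the multiplicity of each eigenvalue `±1` of `a` is the
sum of its multiplicities on the summands. On `range S` the map `S` is injective and exchanges
the `1`- and `-1`-eigenspaces of `a`, so `range S` contributes nothing to the difference.
-/

open scoped InnerProductSpace

open LinearMap Module

section Ring

variable {R V : Type*} [Ring R] [AddCommGroup V] [Module R V]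

def subSymm (ψ : V ≃ₗ[R] V) : End R V := (ψ : V →ₗ[R] V) - ψ.symm

@[simp]
lemma subSymm_apply (ψ : V ≃ₗ[R] V) (x : V) : subSymm ψ x = ψ x - ψ.symm x := rfl

variable {a : End R V} {ψ : V ≃ₗ[R] V}

lemma mem_invtSubmodule_sub_id {p : Submodule R V} (hp : p ∈ a.invtSubmodule) :
    p ∈ (a - LinearMap.id).invtSubmodule :=
  fun _ hx => p.sub_mem (hp hx) hx

lemma mem_invtSubmodule_add_id {p : Submodule R V} (hp : p ∈ a.invtSubmodule) :
    p ∈ (a + LinearMap.id).invtSubmodule :=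
  fun _ hx => p.add_mem (hp hx) hx

lemma range_mem_invtSubmodule_of_comp_eq_neg {S : End R V} (hanti : a ∘ₗ S = -(S ∘ₗ a)) :
    range S ∈ a.invtSubmodule := by
  rintro _ ⟨y, rfl⟩
  exact ⟨-a y, by simpa using congr($hanti y).symm⟩

lemma ker_sub_id_mem_invtSubmodule_of_comp_eq (hcomm : a ∘ₗ ψ = ψ.symm ∘ₗ a) :
    ker ((ψ : V →ₗ[R] V) - LinearMap.id) ∈ a.invtSubmodule := by
  intro x hx
  have hx : ψ x = x := sub_eq_zero.mp hx
  have hax : a x = ψ.symm (a x) := by simpa [hx] using congr($hcomm x)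
  exact sub_eq_zero.mpr (ψ.eq_symm_apply.mp hax)

lemma ker_add_id_mem_invtSubmodule_of_comp_eq (hcomm : a ∘ₗ ψ = ψ.symm ∘ₗ a) :
    ker ((ψ : V →ₗ[R] V) + LinearMap.id) ∈ a.invtSubmodule := by
  intro x hx
  have hx : ψ x = -x := add_eq_zero_iff_eq_neg.mp hx
  have hax : -a x = ψ.symm (a x) := by simpa [hx] using congr($hcomm x)
  exact add_eq_zero_iff_eq_neg.mpr (by simpa using congr(-$(ψ.eq_symm_apply.mp hax)))

lemma comp_subSymm_eq_neg (hcomm : a ∘ₗ ψ = ψ.symm ∘ₗ a) :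
    a ∘ₗ subSymm ψ = -(subSymm ψ ∘ₗ a) := by
  have haψ : ∀ y, a (ψ y) = ψ.symm (a y) := fun y => congr($hcomm y)
  have hψa : ∀ y, ψ (a y) = a (ψ.symm y) := fun y => by
    rw [← ψ.eq_symm_apply, ← haψ, ψ.apply_symm_apply]
  ext y
  simp [hψa, haψ]

end Ring

section Field

variable {K V : Type*} [Field K] [AddCommGroup V] [Module K V]

lemma ker_inf_sup_eq_of_mem_invtSubmodule (f : End K V) {P Q : Submodule K V}
    (hPQ : Disjoint P Q) (hP : P ∈ f.invtSubmodule) (hQ : Q ∈ f.invtSubmodule) :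
    ker f ⊓ (P ⊔ Q) = ker f ⊓ P ⊔ ker f ⊓ Q := by
  refine le_antisymm ?_ (sup_le (inf_le_inf_left _ le_sup_left) (inf_le_inf_left _ le_sup_right))
  rintro _ ⟨hx, hxPQ⟩
  obtain ⟨p, hp, q, hq, rfl⟩ := Submodule.mem_sup.mp hxPQ
  have hsum : f p = -f q := eq_neg_of_add_eq_zero_left (by simpa using hx)
  have hfp : f p = 0 := by
    have hmem : f p ∈ P ⊓ Q := ⟨hP hp, hsum ▸ Q.neg_mem (hQ hq)⟩
    simpa [hPQ.eq_bot] using hmem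
  have hfq : f q = 0 := by simpa [hfp] using hsum
  exact Submodule.add_mem_sup ⟨hfp, hp⟩ ⟨hfq, hq⟩

lemma disjoint_ker_sub_id_ker_add_id (f : End K V) (h2 : (2 : K) ≠ 0) :
    Disjoint (ker (f - LinearMap.id)) (ker (f + LinearMap.id)) := by
  rw [Submodule.disjoint_def]
  intro x hx hx'
  have hneg : x = -x := (sub_eq_zero.mp hx).symm.trans (add_eq_zero_iff_eq_neg.mp hx')
  have htwo : (2 : K) • x = 0 := by
    rw [two_smul]
    nth_rewrite 2 [hneg]
    exact add_neg_cancel x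
  simpa [h2] using htwo

lemma ker_subSymm_eq_sup (ψ : V ≃ₗ[K] V) (h2 : (2 : K) ≠ 0) :
    ker (subSymm ψ) =
      ker ((ψ : V →ₗ[K] V) - LinearMap.id) ⊔ ker ((ψ : V →ₗ[K] V) + LinearMap.id) := by
  refine le_antisymm (fun x hx => ?_) (sup_le (fun x hx => ?_) (fun x hx => ?_))
  · have hψψ : ψ (ψ x) = x := by
      rw [show ψ x = ψ.symm x from sub_eq_zero.mp hx]
      exact ψ.apply_symm_apply x
    have hdecomp : x = (2 : K)⁻¹ • (x + ψ x) + (2 : K)⁻¹ • (x - ψ x) := by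
      rw [← smul_add, add_add_sub_cancel, ← two_smul K, smul_smul, inv_mul_cancel₀ h2, one_smul]
    rw [hdecomp]
    refine Submodule.add_mem_sup ?_ ?_ <;> simp [hψψ, add_comm, smul_sub]
  · have hx : ψ x = x := sub_eq_zero.mp hx
    simp [hx, ψ.symm_apply_eq.mpr hx.symm]
  · have hx : ψ x = -x := add_eq_zero_iff_eq_neg.mp hx
    have hsymm : ψ.symm x = -x := by rw [ψ.symm_apply_eq, map_neg, hx, neg_neg]
    simp [hx, hsymm]

variable [FiniteDimensional K V]

lemma finrank_ker_inf_sup_of_mem_invtSubmodule (f : End K V) {P Q : Submodule K V}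
    (hPQ : Disjoint P Q) (hP : P ∈ f.invtSubmodule) (hQ : Q ∈ f.invtSubmodule) :
    finrank K ↥(ker f ⊓ (P ⊔ Q)) = finrank K ↥(ker f ⊓ P) + finrank K ↥(ker f ⊓ Q) := by
  have hdisj : Disjoint (ker f ⊓ P) (ker f ⊓ Q) := hPQ.mono inf_le_right inf_le_right
  rw [ker_inf_sup_eq_of_mem_invtSubmodule f hPQ hP hQ,
    ← Submodule.finrank_sup_add_finrank_inf_eq, hdisj.eq_bot, finrank_bot, add_zero]

lemma finrank_ker_eq_of_isCompl (f : End K V) {P Q R : Submodule K V}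
    (hPQ : Disjoint P Q) (hPQR : IsCompl (P ⊔ Q) R) (hP : P ∈ f.invtSubmodule)
    (hQ : Q ∈ f.invtSubmodule) (hR : R ∈ f.invtSubmodule) :
    finrank K ↥(ker f) =
      finrank K ↥(ker f ⊓ P) + finrank K ↥(ker f ⊓ Q) + finrank K ↥(ker f ⊓ R) := by
  rw [← finrank_ker_inf_sup_of_mem_invtSubmodule f hPQ hP hQ,
    ← finrank_ker_inf_sup_of_mem_invtSubmodule f hPQR.disjoint
      (End.invtSubmodule.sup_mem hP hQ) hR, hPQR.codisjoint.eq_top, inf_top_eq]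

variable {a S : End K V}

lemma finrank_ker_sub_id_inf_range_le (hanti : a ∘ₗ S = -(S ∘ₗ a))
    (hS : Disjoint (ker S) (range S)) :
    finrank K ↥(ker (a - LinearMap.id) ⊓ range S) ≤
      finrank K ↥(ker (a + LinearMap.id) ⊓ range S) := by
  have hmaps : ∀ x ∈ ker (a - LinearMap.id) ⊓ range S,
      S x ∈ ker (a + LinearMap.id) ⊓ range S := by
    rintro x ⟨hx, -⟩
    have hax : a x = x := sub_eq_zero.mp hx
    have haSx : a (S x) = -S x := by simpa [hax] using congr($hanti x)
    exact ⟨by simp [haSx], mem_range_self S x⟩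
  refine finrank_le_finrank_of_injective (f := S.restrict hmaps) ?_
  rintro ⟨x, hx⟩ ⟨y, hy⟩ hxy
  have hSxy : S (x - y) = 0 := by simpa [sub_eq_zero, Subtype.ext_iff] using hxy
  have hmem : x - y ∈ ker S ⊓ range S := ⟨hSxy, Submodule.sub_mem _ hx.2 hy.2⟩
  simpa [hS.eq_bot, sub_eq_zero] using hmem

lemma finrank_ker_sub_id_inf_range_eq (hanti : a ∘ₗ S = -(S ∘ₗ a))
    (hS : Disjoint (ker S) (range S)) :
    finrank K ↥(ker (a - LinearMap.id) ⊓ range S) =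
      finrank K ↥(ker (a + LinearMap.id) ⊓ range S) := by
  refine le_antisymm (finrank_ker_sub_id_inf_range_le hanti hS) ?_
  -- `-a` also anticommutes with `S`, and its `±1`-eigenspaces are the `∓1`-eigenspaces of `a`.
  have hanti' : (-a) ∘ₗ S = -(S ∘ₗ (-a)) := by simp [hanti]
  have h := finrank_ker_sub_id_inf_range_le hanti' hS
  rwa [← neg_add', neg_add_eq_sub, ← neg_sub, ker_neg, ker_neg] at h

end Field

section Unitary

variable {𝕜 V : Type*} [RCLike 𝕜] [NormedAddCommGroup V] [InnerProductSpace 𝕜 V]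

lemma orthogonal_range_eq_ker_of_inner_map_eq_neg {T : V →ₗ[𝕜] V}
    (hT : ∀ x y, ⟪T x, y⟫_𝕜 = -⟪x, T y⟫_𝕜) : (range T)ᗮ = ker T := by
  ext x
  simp only [Submodule.mem_orthogonal, mem_range, forall_exists_index, forall_apply_eq_imp_iff,
    mem_ker, hT, neg_eq_zero]
  exact ⟨fun h => inner_self_eq_zero.mp (h (T x)), fun h y => by rw [h, inner_zero_right]⟩

variable {ψ : V ≃ₗ[𝕜] V}

lemma inner_subSymm_apply (hψ : ∀ x y, ⟪ψ x, ψ y⟫_𝕜 = ⟪x, y⟫_𝕜) (x y : V) :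
    ⟪subSymm ψ x, y⟫_𝕜 = -⟪x, subSymm ψ y⟫_𝕜 := by
  have h₁ : ⟪ψ x, y⟫_𝕜 = ⟪x, ψ.symm y⟫_𝕜 := by simpa using hψ x (ψ.symm y)
  have h₂ : ⟪ψ.symm x, y⟫_𝕜 = ⟪x, ψ y⟫_𝕜 := by simpa using (hψ (ψ.symm x) y).symm
  simp [inner_sub_left, inner_sub_right, h₁, h₂]

lemma isCompl_ker_range_subSymm [FiniteDimensional 𝕜 V]
    (hψ : ∀ x y, ⟪ψ x, ψ y⟫_𝕜 = ⟪x, y⟫_𝕜) :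
    IsCompl (ker (subSymm ψ)) (range (subSymm ψ)) := by
  rw [← orthogonal_range_eq_ker_of_inner_map_eq_neg (inner_subSymm_apply hψ)]
  exact (Submodule.isCompl_orthogonal _).symm

end Unitary

theorem stmt_8_general {V : Type*} [NormedAddCommGroup V] [InnerProductSpace ℂ V]
    [FiniteDimensional ℂ V] (a : V →ₗ[ℂ] V) (ψ : V ≃ₗ[ℂ] V)
    (hψ_unitary : ∀ x y : V, ⟪ψ x, ψ y⟫_ℂ = ⟪x, y⟫_ℂ)
    (ha2 : a ∘ₗ a = LinearMap.id)
    (hrel : a ∘ₗ (ψ : V →ₗ[ℂ] V) ∘ₗ a = (ψ.symm : V →ₗ[ℂ] V)) :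
    (Module.finrank ℂ ↥(LinearMap.ker (a - LinearMap.id)) : ℤ)
        - (Module.finrank ℂ ↥(LinearMap.ker (a + LinearMap.id)) : ℤ)
      = ((Module.finrank ℂ ↥(LinearMap.ker (a - LinearMap.id)
              ⊓ LinearMap.ker ((ψ : V →ₗ[ℂ] V) - LinearMap.id)) : ℤ)
          - (Module.finrank ℂ ↥(LinearMap.ker (a + LinearMap.id)
              ⊓ LinearMap.ker ((ψ : V →ₗ[ℂ] V) - LinearMap.id)) : ℤ))
        + ((Module.finrank ℂ ↥(LinearMap.ker (a - LinearMap.id)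
              ⊓ LinearMap.ker ((ψ : V →ₗ[ℂ] V) + LinearMap.id)) : ℤ)
          - (Module.finrank ℂ ↥(LinearMap.ker (a + LinearMap.id)
              ⊓ LinearMap.ker ((ψ : V →ₗ[ℂ] V) + LinearMap.id)) : ℤ)) := by
  have hcomm : a ∘ₗ ψ = ψ.symm ∘ₗ a := by
    calc a ∘ₗ ψ = a ∘ₗ ψ ∘ₗ (a ∘ₗ a) := by rw [ha2]; rfl
      _ = ψ.symm ∘ₗ a := by rw [← hrel]; rfl
  have hanti := comp_subSymm_eq_neg hcomm
  have hker_range := isCompl_ker_range_subSymm hψ_unitary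
  have hcompl := ker_subSymm_eq_sup ψ two_ne_zero ▸ hker_range
  have hdisj := disjoint_ker_sub_id_ker_add_id (ψ : V →ₗ[ℂ] V) two_ne_zero
  have hdim : ∀ f : V →ₗ[ℂ] V, (∀ p ∈ End.invtSubmodule a, p ∈ End.invtSubmodule f) →
      finrank ℂ ↥(ker f) = finrank ℂ ↥(ker f ⊓ ker ((ψ : V →ₗ[ℂ] V) - LinearMap.id))
        + finrank ℂ ↥(ker f ⊓ ker ((ψ : V →ₗ[ℂ] V) + LinearMap.id))
        + finrank ℂ ↥(ker f ⊓ range (subSymm ψ)) := fun f hf =>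
    finrank_ker_eq_of_isCompl f hdisj hcompl
      (hf _ (ker_sub_id_mem_invtSubmodule_of_comp_eq hcomm))
      (hf _ (ker_add_id_mem_invtSubmodule_of_comp_eq hcomm))
      (hf _ (range_mem_invtSubmodule_of_comp_eq_neg hanti))
  rw [hdim _ fun _ => mem_invtSubmodule_sub_id, hdim _ fun _ => mem_invtSubmodule_add_id,
    finrank_ker_sub_id_inf_range_eq hanti hker_range.disjoint]
  push_cast
  ring

/-- For unitary operators `a`, `ψ` on a finite-dimensional complex inner product space
with `a² = id` and `a ψ a = ψ⁻¹`, the difference `dim ker(a-1) - dim ker(a+1)` equals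
the sum of the corresponding differences computed on the `+1` and `-1` eigenspaces
of `ψ`. -/
theorem stmt_8 {V : Type*} [NormedAddCommGroup V] [InnerProductSpace ℂ V]
    [FiniteDimensional ℂ V] (a : V →ₗ[ℂ] V) (ψ : V ≃ₗ[ℂ] V)
    (ha_unitary : ∀ x y : V, ⟪a x, a y⟫_ℂ = ⟪x, y⟫_ℂ)
    (hψ_unitary : ∀ x y : V, ⟪ψ x, ψ y⟫_ℂ = ⟪x, y⟫_ℂ)
    (ha2 : a ∘ₗ a = LinearMap.id)
    (hrel : a ∘ₗ (ψ : V →ₗ[ℂ] V) ∘ₗ a = (ψ.symm : V →ₗ[ℂ] V)) :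
    (Module.finrank ℂ ↥(LinearMap.ker (a - LinearMap.id)) : ℤ)
        - (Module.finrank ℂ ↥(LinearMap.ker (a + LinearMap.id)) : ℤ)
      = ((Module.finrank ℂ ↥(LinearMap.ker (a - LinearMap.id)
              ⊓ LinearMap.ker ((ψ : V →ₗ[ℂ] V) - LinearMap.id)) : ℤ)
          - (Module.finrank ℂ ↥(LinearMap.ker (a + LinearMap.id)
              ⊓ LinearMap.ker ((ψ : V →ₗ[ℂ] V) - LinearMap.id)) : ℤ))
        + ((Module.finrank ℂ ↥(LinearMap.ker (a - LinearMap.id)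
              ⊓ LinearMap.ker ((ψ : V →ₗ[ℂ] V) + LinearMap.id)) : ℤ)
          - (Module.finrank ℂ ↥(LinearMap.ker (a + LinearMap.id)
              ⊓ LinearMap.ker ((ψ : V →ₗ[ℂ] V) + LinearMap.id)) : ℤ)) :=
  stmt_8_general a ψ hψ_unitary ha2 hrel
end

section
/- Let V be a finite-dimensional complex inner product space and let a, ψ : V → V be unitary linear maps with a² = id and a ∘ ψ ∘ a = ψ⁻¹. Assume that −1 is not an eigenvalue of ψ, i.e. ker(ψ + id) = {0}. Then dim ker(a − id) − dim ker(a + id) = dim(ker(a − id) ∩ ker(ψ − id)) − dim(ker(a + id) ∩ ker(ψ − id)). -/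
/-!
Put `T = ψ - ψ⁻¹`. Unitarity of `ψ` makes `T` skew-adjoint, so `V = ker T ⊕ range T`, and since
`-1` is not an eigenvalue of `ψ`, `ker T` is the fixed space of `ψ`. The relation `a ψ a = ψ⁻¹`
says that `a` anticommutes with `T`; hence both summands are `a`-invariant, and on `range T`, where
`T` is injective, `T` swaps the `±1`-eigenspaces of `a`, which therefore contribute equally.
-/

open scoped InnerProductSpace
open Module LinearMap

section Anticommuting

variable {K V : Type*} [Field K] [AddCommGroup V] [Module K V]

theorem LinearMap.ker_eq_inf_sup_inf_of_isCompl {W U : Submodule K V} (hWU : IsCompl W U)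
    {f : V →ₗ[K] V} (hW : W ≤ W.comap f) (hU : U ≤ U.comap f) :
    ker f = ker f ⊓ W ⊔ ker f ⊓ U := by
  refine le_antisymm (fun v hv => ?_) (sup_le inf_le_left inf_le_left)
  obtain ⟨w, hw, u, hu, rfl⟩ :=
    Submodule.mem_sup.mp (hWU.sup_eq_top ▸ Submodule.mem_top (x := v))
  have hfw : f w = -f u := eq_neg_of_add_eq_zero_left (by simpa using hv)
  have hfw0 : f w = 0 := by
    refine (Submodule.disjoint_def.mp hWU.disjoint) _ (hW hw) ?_
    rw [hfw]
    exact U.neg_mem (hU hu)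
  have hfu0 : f u = 0 := by simpa [hfw0] using hfw.symm
  exact Submodule.add_mem_sup ⟨hfw0, hw⟩ ⟨hfu0, hu⟩

theorem LinearMap.finrank_ker_eq_add_of_isCompl [FiniteDimensional K V] {W U : Submodule K V}
    (hWU : IsCompl W U) {f : V →ₗ[K] V} (hW : W ≤ W.comap f) (hU : U ≤ U.comap f) :
    finrank K (ker f) = finrank K ↥(ker f ⊓ W) + finrank K ↥(ker f ⊓ U) := by
  have hdisj : ker f ⊓ W ⊓ (ker f ⊓ U) = ⊥ :=
    eq_bot_iff.mpr <| hWU.inf_eq_bot ▸ inf_le_inf inf_le_right inf_le_right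
  conv_lhs => rw [ker_eq_inf_sup_inf_of_isCompl hWU hW hU]
  rw [← Submodule.finrank_sup_add_finrank_inf_eq, hdisj, finrank_bot, add_zero]

theorem LinearMap.isCompl_ker_range_of_disjoint [FiniteDimensional K V] {T : V →ₗ[K] V}
    (hT : Disjoint (ker T) (range T)) : IsCompl (ker T) (range T) :=
  (Submodule.isCompl_iff_disjoint _ _ (by rw [add_comm, finrank_range_add_finrank_ker])).mpr hT

theorem LinearMap.finrank_le_finrank_of_mapsTo_of_disjoint_ker [FiniteDimensional K V]
    {T : V →ₗ[K] V} {P Q : Submodule K V} (hP : Disjoint (ker T) P) (hPQ : P ≤ Q.comap T) :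
    finrank K P ≤ finrank K Q := by
  refine finrank_le_finrank_of_injective (f := T.restrict hPQ) ?_
  rw [← ker_eq_bot, eq_bot_iff]
  rintro ⟨x, hx⟩ hker
  have hTx : T x = 0 := congrArg Subtype.val hker
  simpa using Submodule.disjoint_def.mp hP x hTx hx

variable [FiniteDimensional K V] {a T : V →ₗ[K] V}

theorem LinearMap.finrank_ker_sub_id_inf_range_eq_of_anticomm (hTa : T ∘ₗ a = -(a ∘ₗ T))
    (hT : Disjoint (ker T) (range T)) :
    finrank K ↥(ker (a - id) ⊓ range T) = finrank K ↥(ker (a + id) ⊓ range T) := by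
  have hTa' (x : V) : T (a x) = -a (T x) := congrFun (congrArg DFunLike.coe hTa) x
  apply le_antisymm <;> refine finrank_le_finrank_of_mapsTo_of_disjoint_ker
    (hT.mono_right inf_le_right) ?_ <;> rintro x ⟨hx, -⟩ <;>
    refine ⟨?_, mem_range_self T x⟩
  · have hax : a x = x := sub_eq_zero.mp hx
    have := hTa' x
    rw [hax] at this
    exact (add_comm _ _).trans (eq_neg_iff_add_eq_zero.mp this)
  · have hax : a x = -x := add_eq_zero_iff_eq_neg.mp hx
    have := hTa' x
    rw [hax, map_neg, neg_inj] at this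
    exact sub_eq_zero.mpr this.symm

theorem LinearMap.finrank_ker_sub_id_sub_finrank_ker_add_id_eq_of_anticomm
    (hTa : T ∘ₗ a = -(a ∘ₗ T)) (hT : Disjoint (ker T) (range T)) :
    (finrank K ↥(ker (a - id)) : ℤ) - finrank K ↥(ker (a + id))
      = finrank K ↥(ker (a - id) ⊓ ker T) - finrank K ↥(ker (a + id) ⊓ ker T) := by
  have hTa' (x : V) : T (a x) = -a (T x) := congrFun (congrArg DFunLike.coe hTa) x
  have hker (c : K) : ker T ≤ (ker T).comap (a + c • id) := fun x (hx : T x = 0) => by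
    simp [hTa', hx]
  have hrange (c : K) : range T ≤ (range T).comap (a + c • id) := by
    rintro _ ⟨y, rfl⟩
    exact ⟨-a y + c • y, by simp [hTa']⟩
  have hcompl := isCompl_ker_range_of_disjoint hT
  have hplus := finrank_ker_eq_add_of_isCompl hcompl (hker (-1)) (hrange (-1))
  have hminus := finrank_ker_eq_add_of_isCompl hcompl (hker 1) (hrange 1)
  rw [neg_one_smul, ← sub_eq_add_neg] at hplus
  rw [one_smul] at hminus
  rw [hplus, hminus, finrank_ker_sub_id_inf_range_eq_of_anticomm hTa hT]
  push_cast
  ring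

end Anticommuting

theorem anticomm_sub_conj_of_mul_self_eq_one {R : Type*} [Ring R] {a p : R} (ha : a * a = 1) :
    (p - a * p * a) * a = -(a * (p - a * p * a)) := by
  simp only [sub_mul, mul_sub, mul_assoc, ha, mul_one]
  simp only [← mul_assoc, ha, one_mul]
  abel

theorem LinearEquiv.ker_sub_symm_eq_ker_sub_one {R M : Type*} [Ring R] [AddCommGroup M]
    [Module R M] (ψ : M ≃ₗ[R] M) (h : ker ((ψ : M →ₗ[R] M) + LinearMap.id) = ⊥) :
    ker ((ψ : M →ₗ[R] M) - (ψ.symm : M →ₗ[R] M)) = ker ((ψ : M →ₗ[R] M) - LinearMap.id) := by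
  have hfactor : (ψ : M →ₗ[R] M) ∘ₗ ((ψ : M →ₗ[R] M) - (ψ.symm : M →ₗ[R] M))
      = ((ψ : M →ₗ[R] M) + LinearMap.id) ∘ₗ ((ψ : M →ₗ[R] M) - LinearMap.id) := by
    ext x; simp
  rw [← ker_comp_of_ker_eq_bot _ ψ.ker, hfactor, ker_comp_of_ker_eq_bot _ h]

section InnerProductSpace

variable {𝕜 E : Type*} [RCLike 𝕜] [NormedAddCommGroup E] [InnerProductSpace 𝕜 E]

theorem disjoint_ker_range_of_inner_map_eq_neg {T : E →ₗ[𝕜] E}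
    (hT : ∀ x y, ⟪T x, y⟫_𝕜 = -⟪x, T y⟫_𝕜) : Disjoint (ker T) (range T) := by
  rw [Submodule.disjoint_def]
  rintro _ (hx : T _ = 0) ⟨y, rfl⟩
  rw [← inner_self_eq_zero (𝕜 := 𝕜), hT, hx, inner_zero_right, neg_zero]

theorem LinearEquiv.inner_sub_symm_apply_left_eq_neg {ψ : E ≃ₗ[𝕜] E}
    (hψ : ∀ x y, ⟪ψ x, ψ y⟫_𝕜 = ⟪x, y⟫_𝕜) (x y : E) :
    ⟪(ψ : E →ₗ[𝕜] E) x - ψ.symm x, y⟫_𝕜 = -⟪x, ψ y - ψ.symm y⟫_𝕜 := by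
  have hadj (u w : E) : ⟪ψ u, w⟫_𝕜 = ⟪u, ψ.symm w⟫_𝕜 := by
    simpa using hψ u (ψ.symm w)
  have hadj' (u w : E) : ⟪ψ.symm u, w⟫_𝕜 = ⟪u, ψ w⟫_𝕜 := by
    simpa using (hψ (ψ.symm u) w).symm
  rw [inner_sub_left, inner_sub_right, LinearEquiv.coe_coe, hadj, hadj']
  ring

end InnerProductSpace

theorem stmt_9_general {V : Type*} [NormedAddCommGroup V] [InnerProductSpace ℂ V]
    [FiniteDimensional ℂ V] (a : V →ₗ[ℂ] V) (ψ : V ≃ₗ[ℂ] V)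
    (hψ_unitary : ∀ x y : V, ⟪ψ x, ψ y⟫_ℂ = ⟪x, y⟫_ℂ)
    (ha2 : a ∘ₗ a = LinearMap.id)
    (hrel : a ∘ₗ (ψ : V →ₗ[ℂ] V) ∘ₗ a = (ψ.symm : V →ₗ[ℂ] V))
    (hno : LinearMap.ker ((ψ : V →ₗ[ℂ] V) + LinearMap.id) = ⊥) :
    (Module.finrank ℂ ↥(LinearMap.ker (a - LinearMap.id)) : ℤ)
        - (Module.finrank ℂ ↥(LinearMap.ker (a + LinearMap.id)) : ℤ)
      = (Module.finrank ℂ ↥(LinearMap.ker (a - LinearMap.id)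
            ⊓ LinearMap.ker ((ψ : V →ₗ[ℂ] V) - LinearMap.id)) : ℤ)
        - (Module.finrank ℂ ↥(LinearMap.ker (a + LinearMap.id)
            ⊓ LinearMap.ker ((ψ : V →ₗ[ℂ] V) - LinearMap.id)) : ℤ) := by
  set T := (ψ : V →ₗ[ℂ] V) - (ψ.symm : V →ₗ[ℂ] V)
  have hTa : T ∘ₗ a = -(a ∘ₗ T) := by
    simpa only [T, ← hrel, Module.End.mul_eq_comp, LinearMap.comp_assoc] using
      anticomm_sub_conj_of_mul_self_eq_one (p := (ψ : V →ₗ[ℂ] V)) ha2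
  have hT : Disjoint (ker T) (range T) :=
    disjoint_ker_range_of_inner_map_eq_neg (ψ.inner_sub_symm_apply_left_eq_neg hψ_unitary)
  rw [← ψ.ker_sub_symm_eq_ker_sub_one hno]
  exact finrank_ker_sub_id_sub_finrank_ker_add_id_eq_of_anticomm hTa hT

/-- For unitary operators `a`, `ψ` on a finite-dimensional complex inner product space
with `a² = id`, `a ψ a = ψ⁻¹`, and `-1` not an eigenvalue of `ψ`, one has
`dim ker(a-1) - dim ker(a+1)
  = dim (ker(a-1) ∩ ker(ψ-1)) - dim (ker(a+1) ∩ ker(ψ-1))`. -/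
theorem stmt_9 {V : Type*} [NormedAddCommGroup V] [InnerProductSpace ℂ V]
    [FiniteDimensional ℂ V] (a : V →ₗ[ℂ] V) (ψ : V ≃ₗ[ℂ] V)
    (ha_unitary : ∀ x y : V, ⟪a x, a y⟫_ℂ = ⟪x, y⟫_ℂ)
    (hψ_unitary : ∀ x y : V, ⟪ψ x, ψ y⟫_ℂ = ⟪x, y⟫_ℂ)
    (ha2 : a ∘ₗ a = LinearMap.id)
    (hrel : a ∘ₗ (ψ : V →ₗ[ℂ] V) ∘ₗ a = (ψ.symm : V →ₗ[ℂ] V))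
    (hno : LinearMap.ker ((ψ : V →ₗ[ℂ] V) + LinearMap.id) = ⊥) :
    (Module.finrank ℂ ↥(LinearMap.ker (a - LinearMap.id)) : ℤ)
        - (Module.finrank ℂ ↥(LinearMap.ker (a + LinearMap.id)) : ℤ)
      = (Module.finrank ℂ ↥(LinearMap.ker (a - LinearMap.id)
            ⊓ LinearMap.ker ((ψ : V →ₗ[ℂ] V) - LinearMap.id)) : ℤ)
        - (Module.finrank ℂ ↥(LinearMap.ker (a + LinearMap.id)
            ⊓ LinearMap.ker ((ψ : V →ₗ[ℂ] V) - LinearMap.id)) : ℤ) :=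
  stmt_9_general a ψ hψ_unitary ha2 hrel hno
end
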